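/- Let A ∈ ℝ^{m×n} have all rows nonzero, b ∈ ℝ^m, and x⋆ ∈ ℝⁿ with A x⋆ = b. Let λ > 0 satisfy ‖Au‖₂² ≥ λ‖u‖₂² for every u in the column space R(Aᵀ) of Aᵀ. Let x_k ∈ ℝⁿ with x_k − x⋆ ∈ R(Aᵀ) and x_k ≠ x⋆, and let r_k = b − Ax_k. Suppose J ⊆ {1,…,m} is a nonempty proper subset with r_k^{(i)} = 0 for every i ∈ J. Define the index set I_k = { i : |r_k^{(i)}|² ≥ (1/2)( max_{1≤l≤m} |r_k^{(l)}|² + Σ_{l=1}^m (‖A^{(l)}‖₂²/‖A‖_F²)|r_k^{(l)}|² ) }, let A_{I_k} and b_{I_k} be the row submatrix of A and subvector of b indexed by I_k, and let μ > 0 satisfy ‖A_{I_k}y‖₂² ≤ μ‖y‖₂² for all y ∈ ℝⁿ. Let x_{k+1} ∈ ℝⁿ satisfy A_{I_k}x_{k+1} = b_{I_k} and x_{k+1} − x_k ∈ R(A_{I_k}ᵀ). Then ‖x_{k+1} − x⋆‖₂² ≤ ( 1 − (1/2) · |I_k| · (min_{i∉J}‖A^{(i)}‖₂²/μ) · (λ/‖A‖_F²)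 · ( ‖A‖_F²/(‖A‖_F² − Σ_{i∈J}‖A^{(i)}‖₂²) + 1 ) ) ‖x_k − x⋆‖₂². -/

import Mathlib

open Matrix

/-- squared Euclidean norm of the `i`-th row of `A` -/
noncomputable def rowSq {m n : ℕ} (A : Matrix (Fin m) (Fin n) ℝ) (i : Fin m) : ℝ :=
  ∑ j, (A i j) ^ 2

/-- squared Frobenius norm of `A` -/
noncomputable def frobSq {m n : ℕ} (A : Matrix (Fin m) (Fin n) ℝ) : ℝ :=
  ∑ i, rowSq A i

/-- `i`-th entry of the residual `b - Ax` -/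
noncomputable def res {m n : ℕ} (A : Matrix (Fin m) (Fin n) ℝ) (b : Fin m → ℝ)
    (x : Fin n → ℝ) (i : Fin m) : ℝ :=
  b i - A.mulVec x i

/-!
The update is the orthogonal projection of `x_k` onto `{x | A_{I_k} x = b_{I_k}}`, which contains
`x⋆`, so Pythagoras gives `‖x_{k+1} - x⋆‖² = ‖x_k - x⋆‖² - ‖x_{k+1} - x_k‖²`, and the bound on
`A_{I_k}` gives `μ ‖x_{k+1} - x_k‖² ≥ ‖r_{I_k}‖²`. Each index of `I_k` contributes at least the
greedy threshold, half the sum of the largest squared residual and the row-weighted mean. As `r_k`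
vanishes on `J`, the largest squared residual is at least
`min_{i ∉ J} ‖A^{(i)}‖² ‖r_k‖² / (‖A‖_F² - ‖A_J‖_F²)` and the weighted mean at least
`min_{i ∉ J} ‖A^{(i)}‖² ‖r_k‖² / ‖A‖_F²`. Finally `‖r_k‖² ≥ λ ‖x_k - x⋆‖²`.
-/

open Finset

section Threshold

variable {ι : Type*} [Fintype ι] [DecidableEq ι] {w r : ι → ℝ} {J : Finset ι} {c M : ℝ}

lemma sum_sub_sum_eq_sum_compl (w : ι → ℝ) (J : Finset ι) :
    (∑ i, w i) - ∑ i ∈ J, w i = ∑ i ∈ Jᶜ, w i :=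
  sub_eq_iff_eq_add.2 (sum_compl_add_sum J w).symm

lemma sum_eq_sum_compl_of_eq_zero {f : ι → ℝ} (hf : ∀ i ∈ J, f i = 0) :
    ∑ i, f i = ∑ i ∈ Jᶜ, f i :=
  (sum_subset (subset_univ _) fun i _ hi => hf i (by simpa using hi)).symm

lemma mul_sum_sq_le_mul_sum_compl (hr : ∀ i ∈ J, r i = 0) (hc : ∀ i ∉ J, c ≤ w i)
    (hw : ∀ i, 0 ≤ w i) (hM : ∀ i, r i ^ 2 ≤ M) :
    c * ∑ i, r i ^ 2 ≤ M * ∑ i ∈ Jᶜ, w i := by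
  rw [sum_eq_sum_compl_of_eq_zero (f := fun i => r i ^ 2) fun i hi => by simp [hr i hi],
    mul_sum, mul_sum]
  refine sum_le_sum fun i hi => ?_
  calc c * r i ^ 2 ≤ w i * r i ^ 2 := by gcongr; exact hc i (mem_compl.1 hi)
    _ ≤ M * w i := by nlinarith [hw i, hM i]

lemma mul_sum_sq_le_sum_mul_sq (hr : ∀ i ∈ J, r i = 0) (hc : ∀ i ∉ J, c ≤ w i) :
    c * ∑ i, r i ^ 2 ≤ ∑ i, w i * r i ^ 2 := by
  rw [sum_eq_sum_compl_of_eq_zero (f := fun i => r i ^ 2) fun i hi => by simp [hr i hi],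
    sum_eq_sum_compl_of_eq_zero (f := fun i => w i * r i ^ 2) fun i hi => by simp [hr i hi],
    mul_sum]
  exact sum_le_sum fun i hi => by gcongr; exact hc i (mem_compl.1 hi)

noncomputable def thresholdRate (c : ℝ) (w : ι → ℝ) (J : Finset ι) : ℝ :=
  (1 / 2) * (c / ∑ i, w i) * ((∑ i, w i) / ((∑ i, w i) - ∑ i ∈ J, w i) + 1)

lemma thresholdRate_nonneg (hc : 0 ≤ c) (hw : ∀ i, 0 ≤ w i) :
    0 ≤ thresholdRate c w J := by
  have hW : 0 ≤ ∑ i, w i := sum_nonneg fun i _ => hw i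
  have hWJ : 0 ≤ ∑ i ∈ Jᶜ, w i := sum_nonneg fun i _ => hw i
  rw [thresholdRate, sum_sub_sum_eq_sum_compl]
  positivity

lemma thresholdRate_mul_sum_sq_le (hr : ∀ i ∈ J, r i = 0) (hc : ∀ i ∉ J, c ≤ w i)
    (hw : ∀ i, 0 ≤ w i) (hwJ : 0 < ∑ i ∈ Jᶜ, w i) (hM : ∀ i, r i ^ 2 ≤ M) :
    thresholdRate c w J * ∑ i, r i ^ 2 ≤ (1 / 2) * (M + ∑ l, (w l / ∑ i, w i) * r l ^ 2) := by
  have hW : 0 < ∑ i, w i := by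
    have := sum_nonneg fun i (_ : i ∈ J) => hw i
    linarith [sum_compl_add_sum J w]
  have hmax : c * (∑ i, r i ^ 2) / ∑ i ∈ Jᶜ, w i ≤ M := by
    rw [div_le_iff₀ hwJ]
    exact mul_sum_sq_le_mul_sum_compl hr hc hw hM
  have hmean : c * (∑ i, r i ^ 2) / ∑ i, w i ≤ ∑ l, (w l / ∑ i, w i) * r l ^ 2 := by
    simp_rw [div_mul_eq_mul_div, ← sum_div]
    gcongr
    exact mul_sum_sq_le_sum_mul_sq hr hc
  calc thresholdRate c w J * ∑ i, r i ^ 2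
      = (1 / 2) * (c * (∑ i, r i ^ 2) / ∑ i ∈ Jᶜ, w i + c * (∑ i, r i ^ 2) / ∑ i, w i) := by
        rw [thresholdRate, sum_sub_sum_eq_sum_compl]
        field_simp
    _ ≤ _ := by gcongr

end Threshold

section Projection

variable {m n : Type*} [Fintype n] {A : Matrix m n ℝ} {I : Finset m}
  {x x' xs : n → ℝ}

lemma sum_mul_eq_zero_of_mem_rowSpan (hsol : ∀ i ∈ I, (A *ᵥ x') i = (A *ᵥ xs) i)
    (hmem : ∃ z : m → ℝ, ∀ j, x' j - x j = ∑ i ∈ I, z i * A i j) :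
    ∑ j, (x' j - x j) * (x' j - xs j) = 0 := by
  obtain ⟨z, hz⟩ := hmem
  simp_rw [hz, sum_mul]
  rw [sum_comm]
  refine sum_eq_zero fun i hi => ?_
  have hrow : ∑ j, A i j * (x' j - xs j) = 0 := by
    simpa [mulVec, dotProduct, mul_sub, sub_eq_zero] using hsol i hi
  simp_rw [mul_assoc, ← mul_sum, hrow, mul_zero]

lemma sum_sq_sub_eq_of_mem_rowSpan (hsol : ∀ i ∈ I, (A *ᵥ x') i = (A *ᵥ xs) i)
    (hmem : ∃ z : m → ℝ, ∀ j, x' j - x j = ∑ i ∈ I, z i * A i j) :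
    ∑ j, (x' j - xs j) ^ 2 = ∑ j, (x j - xs j) ^ 2 - ∑ j, (x' j - x j) ^ 2 := by
  have horth := sum_mul_eq_zero_of_mem_rowSpan hsol hmem
  calc ∑ j, (x' j - xs j) ^ 2
      = ∑ j, ((x j - xs j) ^ 2 - (x' j - x j) ^ 2 + 2 * ((x' j - x j) * (x' j - xs j))) :=
        sum_congr rfl fun j _ => by ring
    _ = _ := by rw [sum_add_distrib, sum_sub_distrib, ← mul_sum, horth]; ring

end Projection

section Residual

variable {m n : ℕ} {A : Matrix (Fin m) (Fin n) ℝ} {b : Fin m → ℝ} {x xs : Fin n → ℝ}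

lemma res_eq_mulVec_sub (hxs : A *ᵥ xs = b) (i : Fin m) : res A b x i = (A *ᵥ (xs - x)) i := by
  simp [res, mulVec_sub, hxs]

lemma mul_sum_sq_sub_le_sum_sq_res (hxs : A *ᵥ xs = b) {lam : ℝ}
    (hspecA : ∀ u : Fin n → ℝ, (∃ y : Fin m → ℝ, u = Aᵀ *ᵥ y) →
      ∑ i, (A *ᵥ u) i ^ 2 ≥ lam * ∑ j, u j ^ 2)
    (hx : ∃ y : Fin m → ℝ, x - xs = Aᵀ *ᵥ y) :
    lam * ∑ j, (x j - xs j) ^ 2 ≤ ∑ i, res A b x i ^ 2 := by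
  have hres : ∀ i, res A b x i ^ 2 = (A *ᵥ (x - xs)) i ^ 2 := fun i => by
    rw [res_eq_mulVec_sub hxs, ← neg_sub, mulVec_neg, Pi.neg_apply, neg_sq]
  simpa [hres] using hspecA _ hx

lemma sum_sq_res_le_of_solves {I : Finset (Fin m)} {μ : ℝ} {x' : Fin n → ℝ}
    (hspecI : ∀ y : Fin n → ℝ, ∑ i ∈ I, (A *ᵥ y) i ^ 2 ≤ μ * ∑ j, y j ^ 2)
    (hsol : ∀ i ∈ I, (A *ᵥ x') i = b i) :
    ∑ i ∈ I, res A b x i ^ 2 ≤ μ * ∑ j, (x' j - x j) ^ 2 := by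
  have hres : ∀ i ∈ I, res A b x i = (A *ᵥ (x' - x)) i := fun i hi => by
    simp [res, mulVec_sub, hsol i hi]
  simpa [sum_congr rfl fun i hi => congrArg (· ^ 2) (hres i hi)] using hspecI (x' - x)

end Residual

lemma rowSq_pos {m n : ℕ} {A : Matrix (Fin m) (Fin n) ℝ} {i : Fin m}
    (hA : (fun j => A i j) ≠ 0) : 0 < rowSq A i := by
  obtain ⟨j, hj⟩ := Function.ne_iff.1 hA
  exact sum_pos' (fun k _ => sq_nonneg _) ⟨j, mem_univ j, sq_pos_of_ne_zero hj⟩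

theorem gmbk_later_step_bound_general (m n : ℕ)
    (A : Matrix (Fin m) (Fin n) ℝ)
    (hA : ∀ i, (fun j => A i j) ≠ 0)
    (b : Fin m → ℝ) (xs : Fin n → ℝ) (hxs : A.mulVec xs = b)
    (lam : ℝ)
    (hspecA : ∀ u : Fin n → ℝ, (∃ y : Fin m → ℝ, u = Aᵀ.mulVec y) →
      ∑ i, (A.mulVec u i) ^ 2 ≥ lam * ∑ j, (u j) ^ 2)
    (xk : Fin n → ℝ) (hxkmem : ∃ y : Fin m → ℝ, xk - xs = Aᵀ.mulVec y)
    (J : Finset (Fin m))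
    (hJres : ∀ i ∈ J, res A b xk i = 0)
    (MxR : ℝ) (hMxR : IsGreatest (Set.range fun i => (res A b xk i) ^ 2) MxR)
    (Ik : Finset (Fin m))
    (hIk : ∀ i, i ∈ Ik ↔ (res A b xk i) ^ 2 ≥
      (1 / 2) * (MxR + ∑ l, (rowSq A l / frobSq A) * (res A b xk l) ^ 2))
    (μ : ℝ) (hμ : 0 < μ)
    (hspecI : ∀ y : Fin n → ℝ, ∑ i ∈ Ik, (A.mulVec y i) ^ 2 ≤ μ * ∑ j, (y j) ^ 2)
    (mJ : ℝ) (hmJ : IsLeast ((fun i => rowSq A i) '' {i | i ∉ J}) mJ)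
    (xk1 : Fin n → ℝ)
    (hxk1sol : ∀ i ∈ Ik, A.mulVec xk1 i = b i)
    (hxk1mem : ∃ z : Fin m → ℝ, ∀ j, xk1 j - xk j = ∑ i ∈ Ik, z i * A i j) :
    ∑ j, (xk1 j - xs j) ^ 2
      ≤ (1 - (1 / 2) * (Ik.card : ℝ) * (mJ / μ) * (lam / frobSq A) *
            (frobSq A / (frobSq A - ∑ i ∈ J, rowSq A i) + 1)) *
          ∑ j, (xk j - xs j) ^ 2 := by
  have hrow : ∀ i, 0 < rowSq A i := fun i => rowSq_pos (hA i)
  obtain ⟨i₀, hi₀, hmJ_eq⟩ := hmJ.1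
  have hJc : 0 < ∑ i ∈ Jᶜ, rowSq A i := sum_pos (fun i _ => hrow i) ⟨i₀, mem_compl.2 hi₀⟩
  have hthreshold : thresholdRate mJ (rowSq A) J * ∑ i, res A b xk i ^ 2
      ≤ (1 / 2) * (MxR + ∑ l, (rowSq A l / frobSq A) * res A b xk l ^ 2) :=
    thresholdRate_mul_sum_sq_le hJres (fun i hi => hmJ.2 ⟨i, hi, rfl⟩) (fun i => (hrow i).le)
      hJc (fun i => hMxR.2 ⟨i, rfl⟩)
  have hstep : Ik.card * thresholdRate mJ (rowSq A) J * (lam * ∑ j, (xk j - xs j) ^ 2)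
      ≤ μ * ∑ j, (xk1 j - xk j) ^ 2 := by
    calc _ ≤ Ik.card * (thresholdRate mJ (rowSq A) J * ∑ i, res A b xk i ^ 2) := by
          rw [mul_assoc]
          gcongr
          · exact thresholdRate_nonneg (hmJ_eq ▸ (hrow i₀).le) fun i => (hrow i).le
          · exact mul_sum_sq_sub_le_sum_sq_res hxs hspecA hxkmem
      _ ≤ Ik.card * ((1 / 2) * (MxR + ∑ l, (rowSq A l / frobSq A) * res A b xk l ^ 2)) := by
          gcongr
      _ ≤ ∑ i ∈ Ik, res A b xk i ^ 2 := by
          simpa using card_nsmul_le_sum Ik _ _ fun i hi => (hIk i).1 hi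
      _ ≤ μ * ∑ j, (xk1 j - xk j) ^ 2 := sum_sq_res_le_of_solves hspecI hxk1sol
  have hrate : (1 / 2) * (Ik.card : ℝ) * (mJ / μ) * (lam / frobSq A) *
      (frobSq A / (frobSq A - ∑ i ∈ J, rowSq A i) + 1) * ∑ j, (xk j - xs j) ^ 2
      = Ik.card * thresholdRate mJ (rowSq A) J * (lam * ∑ j, (xk j - xs j) ^ 2) / μ := by
    rw [thresholdRate, frobSq]
    ring
  rw [sum_sq_sub_eq_of_mem_rowSpan (fun i hi => by rw [hxk1sol i hi, hxs]) hxk1mem, sub_mul,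
    one_mul, hrate]
  linarith [(div_le_iff₀' hμ).2 hstep]

/-- the bound (2a) of Theorem 2 for the GMBK method (for iterates `k ≥ 1`,
where the residual vanishes on the previously used index set `J`). The block Kaczmarz
update `x_{k+1} = x_k + A_{I_k}†(b_{I_k} − A_{I_k}x_k)` is characterized by
`A_{I_k}x_{k+1} = b_{I_k}` and `x_{k+1} − x_k ∈ R(A_{I_k}ᵀ)`. -/
theorem gmbk_later_step_bound (m n : ℕ)
    (A : Matrix (Fin m) (Fin n) ℝ)
    (hA : ∀ i, (fun j => A i j) ≠ 0)
    (b : Fin m → ℝ) (xs : Fin n → ℝ) (hxs : A.mulVec xs = b)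
    (lam : ℝ) (hlam : 0 < lam)
    (hspecA : ∀ u : Fin n → ℝ, (∃ y : Fin m → ℝ, u = Aᵀ.mulVec y) →
      ∑ i, (A.mulVec u i) ^ 2 ≥ lam * ∑ j, (u j) ^ 2)
    (xk : Fin n → ℝ) (hxkmem : ∃ y : Fin m → ℝ, xk - xs = Aᵀ.mulVec y)
    (hxkne : xk ≠ xs)
    (J : Finset (Fin m)) (hJne : J.Nonempty) (hJproper : J ≠ Finset.univ)
    (hJres : ∀ i ∈ J, res A b xk i = 0)
    (MxR : ℝ) (hMxR : IsGreatest (Set.range fun i => (res A b xk i) ^ 2) MxR)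
    (Ik : Finset (Fin m))
    (hIk : ∀ i, i ∈ Ik ↔ (res A b xk i) ^ 2 ≥
      (1 / 2) * (MxR + ∑ l, (rowSq A l / frobSq A) * (res A b xk l) ^ 2))
    (μ : ℝ) (hμ : 0 < μ)
    (hspecI : ∀ y : Fin n → ℝ, ∑ i ∈ Ik, (A.mulVec y i) ^ 2 ≤ μ * ∑ j, (y j) ^ 2)
    (mJ : ℝ) (hmJ : IsLeast ((fun i => rowSq A i) '' {i | i ∉ J}) mJ)
    (xk1 : Fin n → ℝ)
    (hxk1sol : ∀ i ∈ Ik, A.mulVec xk1 i = b i)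
    (hxk1mem : ∃ z : Fin m → ℝ, ∀ j, xk1 j - xk j = ∑ i ∈ Ik, z i * A i j) :
    ∑ j, (xk1 j - xs j) ^ 2
      ≤ (1 - (1 / 2) * (Ik.card : ℝ) * (mJ / μ) * (lam / frobSq A) *
            (frobSq A / (frobSq A - ∑ i ∈ J, rowSq A i) + 1)) *
          ∑ j, (xk j - xs j) ^ 2 :=
  gmbk_later_step_bound_general m n A hA b xs hxs lam hspecA xk hxkmem J hJres MxR hMxR Ik hIk μ hμ
    hspecI mJ hmJ xk1 hxk1sol hxk1mem
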